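/- arXiv:2211.13473 — 4 statements merged into one kernel-verified Lean document; each statement's English description precedes it below -/
import Mathlib

section
/- There is a universal constant C > 0 such that for every 1 ≤ q ≤ 2 and every finite sequence Z_1, ..., Z_s of independent real-valued random variables with E Z_i = 0 and E|Z_i|^q < ∞ for all i, one has ‖Σ_{i=1}^s Z_i‖_q ≤ C · (Σ_{i=1}^s ‖Z_i‖_q^q)^{1/q}. In particular, if the Z_i are i.i.d., ‖Σ_{i=1}^s Z_i‖_q ≤ C · s^{1/q} · ‖Z_1‖_q. -/
/-!
Let `φ t = |t| ^ q`, so that `φ' t = q * sign t * |t| ^ (q - 1)`. Convexity of `φ` at `x + y`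
together with the `(q - 1)`-Hölder continuity of `φ'` (with constant `2 q`) gives the pointwise
bound `|x + y| ^ q ≤ |x| ^ q + φ' x * y + 2 q |y| ^ q`. For independent `X`, `Y` with `Y` centered
the middle term has expectation `E[φ' X] * E[Y] = 0`, so `E|X + Y| ^ q ≤ E|X| ^ q + 2 q E|Y| ^ q`.
Adding the summands one at a time gives `E|∑ Z_i| ^ q ≤ 2 q ∑ E|Z_i| ^ q`, and
`(2 q) ^ (1 / q) ≤ 4`.
-/

open MeasureTheory ProbabilityTheory
open scoped ENNReal

-- `signedRpow t p = sign t * |t| ^ p`; `q * signedRpow t (q - 1)` is the derivative of `|t| ^ q`.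
noncomputable def signedRpow (t p : ℝ) : ℝ := t * |t| ^ (p - 1)

section SignedRpow

variable {t p : ℝ}

@[simp]
lemma signedRpow_zero_left (p : ℝ) : signedRpow 0 p = 0 := by simp [signedRpow]

lemma signedRpow_neg_left (t p : ℝ) : signedRpow (-t) p = -signedRpow t p := by
  simp [signedRpow]

lemma signedRpow_of_pos (ht : 0 < t) : signedRpow t p = t ^ p := by
  rw [signedRpow, abs_of_pos ht, mul_comm, ← Real.rpow_add_one ht.ne', sub_add_cancel]

lemma abs_signedRpow (ht : t ≠ 0) : |signedRpow t p| = |t| ^ p := by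
  rw [signedRpow, abs_mul, abs_of_nonneg (Real.rpow_nonneg (abs_nonneg t) _), mul_comm,
    ← Real.rpow_add_one (abs_ne_zero.2 ht), sub_add_cancel]

lemma abs_signedRpow_le (t p : ℝ) : |signedRpow t p| ≤ |t| ^ p := by
  rcases eq_or_ne t 0 with rfl | ht
  · simpa using Real.rpow_nonneg le_rfl p
  · exact (abs_signedRpow ht).le

lemma signedRpow_mul_self (ht : t ≠ 0) : signedRpow t p * t = |t| ^ (p + 1) := by
  have hat : |t| ≠ 0 := abs_ne_zero.2 ht
  calc signedRpow t p * t = |t| ^ (p - 1) * (t * t) := by rw [signedRpow]; ring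
    _ = |t| ^ (p - 1) * |t| * |t| := by rw [← abs_mul_abs_self, mul_assoc]
    _ = |t| ^ (p + 1) := by rw [← Real.rpow_add_one hat, ← Real.rpow_add_one hat]; ring_nf

@[fun_prop]
lemma measurable_signedRpow (p : ℝ) : Measurable fun t => signedRpow t p := by
  unfold signedRpow; fun_prop

end SignedRpow

lemma abs_rpow_sub_rpow_le {u v p : ℝ} (hu : 0 ≤ u) (hv : 0 ≤ v) (hp0 : 0 ≤ p) (hp1 : p ≤ 1) :
    |u ^ p - v ^ p| ≤ |u - v| ^ p := by
  wlog hvu : v ≤ u generalizing u v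
  · rw [abs_sub_comm, abs_sub_comm u]
    exact this hv hu (le_of_not_ge hvu)
  have hsub := Real.rpow_add_le_add_rpow (sub_nonneg.2 hvu) hv hp0 hp1
  rw [sub_add_cancel] at hsub
  rw [abs_of_nonneg (sub_nonneg.2 (Real.rpow_le_rpow hv hvu hp0)), abs_of_nonneg (sub_nonneg.2 hvu)]
  linarith

lemma abs_signedRpow_sub_signedRpow_le {p : ℝ} (hp0 : 0 ≤ p) (hp1 : p ≤ 1) (a b : ℝ) :
    |signedRpow a p - signedRpow b p| ≤ 2 * |a - b| ^ p := by
  have hpos : ∀ a b : ℝ, 0 < a → 0 < b → |signedRpow a p - signedRpow b p| ≤ 2 * |a - b| ^ p := by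
    intro a b ha hb
    rw [signedRpow_of_pos ha, signedRpow_of_pos hb]
    linarith [abs_rpow_sub_rpow_le ha.le hb.le hp0 hp1, Real.rpow_nonneg (abs_nonneg (a - b)) p]
  rcases le_or_gt (a * b) 0 with hab | hab
  · have ha : |a| ≤ |a - b| := by
      cases abs_cases a <;> cases abs_cases b <;> cases abs_cases (a - b) <;> nlinarith
    have hb : |b| ≤ |a - b| := by
      cases abs_cases a <;> cases abs_cases b <;> cases abs_cases (a - b) <;> nlinarith
    calc |signedRpow a p - signedRpow b p| ≤ |signedRpow a p| + |signedRpow b p| := abs_sub _ _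
      _ ≤ |a| ^ p + |b| ^ p := add_le_add (abs_signedRpow_le a p) (abs_signedRpow_le b p)
      _ ≤ |a - b| ^ p + |a - b| ^ p := by gcongr
      _ = 2 * |a - b| ^ p := by ring
  · rcases pos_and_pos_or_neg_and_neg_of_mul_pos hab with ⟨ha, hb⟩ | ⟨ha, hb⟩
    · exact hpos a b ha hb
    · have h := hpos (-a) (-b) (neg_pos.2 ha) (neg_pos.2 hb)
      rwa [signedRpow_neg_left, signedRpow_neg_left, ← neg_sub', abs_neg, ← neg_sub', abs_neg] at h

lemma rpow_tangent_le {u v q : ℝ} (hu : 0 < u) (hv : 0 ≤ v) (hq : 1 ≤ q) :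
    u ^ q + q * u ^ (q - 1) * (v - u) ≤ v ^ q := by
  have h := one_add_mul_self_le_rpow_one_add (s := v / u - 1) (by linarith [div_nonneg hv hu.le]) hq
  rw [add_sub_cancel, Real.div_rpow hv hu.le, le_div_iff₀ (by positivity)] at h
  rw [Real.rpow_sub_one hu.ne']
  refine le_of_eq_of_le ?_ h
  field_simp

lemma abs_rpow_tangent_le {q : ℝ} (hq : 1 ≤ q) (a b : ℝ) :
    |a| ^ q + q * signedRpow a (q - 1) * (b - a) ≤ |b| ^ q := by
  rcases eq_or_ne a 0 with rfl | ha
  · simp [Real.zero_rpow (by positivity : q ≠ 0), Real.rpow_nonneg]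
  have hsb : signedRpow a (q - 1) * b ≤ |a| ^ (q - 1) * |b| := by
    calc signedRpow a (q - 1) * b ≤ |signedRpow a (q - 1)| * |b| := by
          rw [← abs_mul]; exact le_abs_self _
      _ = |a| ^ (q - 1) * |b| := by rw [abs_signedRpow ha]
  have hsa : signedRpow a (q - 1) * a = |a| ^ q := by
    rw [signedRpow_mul_self ha, sub_add_cancel]
  have htan := rpow_tangent_le (abs_pos.2 ha) (abs_nonneg b) hq
  rw [Real.rpow_sub_one (abs_ne_zero.2 ha)] at htan hsb
  calc |a| ^ q + q * signedRpow a (q - 1) * (b - a)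
      = |a| ^ q + q * (signedRpow a (q - 1) * b) - q * (signedRpow a (q - 1) * a) := by ring
    _ ≤ |a| ^ q + q * (|a| ^ q / |a| * |b|) - q * |a| ^ q := by rw [hsa]; gcongr
    _ = |a| ^ q + q * (|a| ^ q / |a|) * (|b| - |a|) := by
          field_simp
          ring
    _ ≤ |b| ^ q := htan

lemma abs_add_rpow_le {q : ℝ} (hq1 : 1 ≤ q) (hq2 : q ≤ 2) (x y : ℝ) :
    |x + y| ^ q ≤ |x| ^ q + q * signedRpow x (q - 1) * y + 2 * q * |y| ^ q := by
  have htan := abs_rpow_tangent_le hq1 (x + y) x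
  have hhol := abs_signedRpow_sub_signedRpow_le (p := q - 1) (by linarith) (by linarith) (x + y) x
  rw [add_sub_cancel_left] at hhol
  have hdiff : (signedRpow (x + y) (q - 1) - signedRpow x (q - 1)) * y ≤ 2 * |y| ^ q := by
    calc (signedRpow (x + y) (q - 1) - signedRpow x (q - 1)) * y
        ≤ |signedRpow (x + y) (q - 1) - signedRpow x (q - 1)| * |y| := by
          rw [← abs_mul]; exact le_abs_self _
      _ ≤ 2 * |y| ^ (q - 1) * |y| := by gcongr
      _ = 2 * |y| ^ q := by
          rw [mul_assoc, ← Real.rpow_add_one' (abs_nonneg y) (by linarith), sub_add_cancel]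
  have hq0 : 0 ≤ q := by linarith
  linarith [mul_le_mul_of_nonneg_left hdiff hq0]

section Moments

variable {Ω : Type*} {mΩ : MeasurableSpace Ω} {μ : Measure Ω} {q : ℝ}

lemma memLp_ofReal_of_lintegral_lt_top {X : Ω → ℝ} (hX : AEStronglyMeasurable X μ) (hq : 0 < q)
    (h : ∫⁻ ω, ENNReal.ofReal (|X ω| ^ q) ∂μ < ∞) : MemLp X (ENNReal.ofReal q) μ := by
  rw [← integrable_norm_rpow_iff hX (by simpa using hq) ENNReal.ofReal_ne_top,
    ENNReal.toReal_ofReal hq.le]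
  exact ⟨(hX.aemeasurable.norm.pow_const q).aestronglyMeasurable,
    (hasFiniteIntegral_iff_ofReal (ae_of_all _ fun ω => by positivity)).2 h⟩

variable [IsFiniteMeasure μ]

lemma MeasureTheory.MemLp.integrable_abs_rpow {X : Ω → ℝ} (hq : 0 ≤ q)
    (hX : MemLp X (ENNReal.ofReal q) μ) : Integrable (fun ω => |X ω| ^ q) μ := by
  simpa [ENNReal.toReal_ofReal hq] using hX.integrable_norm_rpow'

lemma MeasureTheory.MemLp.lintegral_ofReal_abs_rpow {X : Ω → ℝ} (hq : 0 ≤ q)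
    (hX : MemLp X (ENNReal.ofReal q) μ) :
    ∫⁻ ω, ENNReal.ofReal (|X ω| ^ q) ∂μ = ENNReal.ofReal (∫ ω, |X ω| ^ q ∂μ) :=
  (ofReal_integral_eq_lintegral_ofReal (hX.integrable_abs_rpow hq)
    (ae_of_all _ fun ω => by positivity)).symm

lemma integral_abs_add_rpow_le {X Y : Ω → ℝ} (hq1 : 1 ≤ q) (hq2 : q ≤ 2)
    (hX : MemLp X (ENNReal.ofReal q) μ) (hY : MemLp Y (ENNReal.ofReal q) μ)
    (hXY : IndepFun X Y μ) (hY0 : μ[Y] = 0) :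
    ∫ ω, |X ω + Y ω| ^ q ∂μ ≤ ∫ ω, |X ω| ^ q ∂μ + 2 * q * ∫ ω, |Y ω| ^ q ∂μ := by
  have hq0 : 0 ≤ q := by linarith
  have hXq := hX.integrable_abs_rpow hq0
  have hYq := hY.integrable_abs_rpow hq0
  set S : Ω → ℝ := fun ω => signedRpow (X ω) (q - 1)
  have hSm : AEStronglyMeasurable S μ :=
    ((measurable_signedRpow _).comp_aemeasurable hX.1.aemeasurable).aestronglyMeasurable
  have hS : Integrable S μ :=
    (integrable_norm_rpow_of_le hX.1 (by linarith) hq0 (by linarith) hXq).mono' hSm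
      (ae_of_all _ fun ω => abs_signedRpow_le _ _)
  have hSY : IndepFun S Y μ := hXY.comp (measurable_signedRpow _) measurable_id
  have hSYint : Integrable (fun ω => S ω * Y ω) μ :=
    hSY.integrable_mul hS (hY.integrable (by simpa using hq1))
  have hcross : ∫ ω, S ω * Y ω ∂μ = 0 := by
    rw [hSY.integral_fun_mul_eq_mul_integral hSm hY.1, hY0, mul_zero]
  have hXS : Integrable (fun ω => |X ω| ^ q + q * (S ω * Y ω)) μ := hXq.add (hSYint.const_mul q)
  calc ∫ ω, |X ω + Y ω| ^ q ∂μ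
      ≤ ∫ ω, (|X ω| ^ q + q * (S ω * Y ω) + 2 * q * |Y ω| ^ q) ∂μ := by
        refine integral_mono ((hX.add hY).integrable_abs_rpow hq0) ?_ fun ω => ?_
        · exact hXS.add (hYq.const_mul _)
        · simpa only [mul_assoc] using abs_add_rpow_le hq1 hq2 (X ω) (Y ω)
    _ = ∫ ω, |X ω| ^ q ∂μ + q * ∫ ω, S ω * Y ω ∂μ + 2 * q * ∫ ω, |Y ω| ^ q ∂μ := by
        rw [integral_add hXS (hYq.const_mul _),
          integral_add hXq (hSYint.const_mul q), integral_const_mul, integral_const_mul]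
    _ = ∫ ω, |X ω| ^ q ∂μ + 2 * q * ∫ ω, |Y ω| ^ q ∂μ := by rw [hcross, mul_zero, add_zero]

lemma integral_abs_sum_rpow_le {ι : Type*} {Z : ι → Ω → ℝ} (hq1 : 1 ≤ q) (hq2 : q ≤ 2)
    (hZ : ∀ i, Measurable (Z i)) (hLq : ∀ i, MemLp (Z i) (ENNReal.ofReal q) μ)
    (hindep : iIndepFun Z μ) (hmean : ∀ i, μ[Z i] = 0) (t : Finset ι) :
    ∫ ω, |∑ i ∈ t, Z i ω| ^ q ∂μ ≤ 2 * q * ∑ i ∈ t, ∫ ω, |Z i ω| ^ q ∂μ := by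
  classical
  induction t using Finset.induction_on with
  | empty => simp [Real.zero_rpow (by linarith : q ≠ 0)]
  | insert j t hj ih =>
    have hstep := integral_abs_add_rpow_le hq1 hq2 (memLp_finsetSum' t fun i _ => hLq i) (hLq j)
      (hindep.indepFun_finsetSum_of_notMem hZ hj) (hmean j)
    simp only [Finset.sum_apply] at hstep
    simp only [Finset.sum_insert hj, add_comm (Z j _)]
    linarith

end Moments

lemma rpow_one_div_le_four_mul {q A B : ℝ} (hq1 : 1 ≤ q) (hq2 : q ≤ 2) (hA : 0 ≤ A)
    (hAB : A ≤ 2 * q * B) : A ^ (1 / q) ≤ 4 * B ^ (1 / q) := by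
  have hq0 : 0 < q := by linarith
  have hB : 0 ≤ B := nonneg_of_mul_nonneg_right (hA.trans hAB) (by positivity)
  calc A ^ (1 / q) ≤ (2 * q * B) ^ (1 / q) := by gcongr
    _ = (2 * q) ^ (1 / q) * B ^ (1 / q) := Real.mul_rpow (by positivity) hB
    _ ≤ 2 * q * B ^ (1 / q) := by
        gcongr
        exact Real.rpow_le_self_of_one_le (by linarith) (by rw [div_le_one hq0]; exact hq1)
    _ ≤ 4 * B ^ (1 / q) := by gcongr; linarith

/-- Type-`q` inequality: there is a universal constant `C > 0` such that for every
`1 ≤ q ≤ 2` and independent centered real random variables `Z₁, …, Z_s` with finite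
`q`-th moments, `‖∑ Z_i‖_q ≤ C · (∑ ‖Z_i‖_q^q)^{1/q}`. -/
theorem type_q_inequality :
    ∃ C : ℝ, 0 < C ∧
      ∀ (Ω : Type) (_ : MeasurableSpace Ω) (μ : Measure Ω), IsProbabilityMeasure μ →
      ∀ q : ℝ, 1 ≤ q → q ≤ 2 →
      ∀ (s : ℕ) (Z : Fin s → Ω → ℝ),
        (∀ i, Measurable (Z i)) →
        iIndepFun Z μ →
        (∀ i, ∫ ω, Z i ω ∂μ = 0) →
        (∀ i, ∫⁻ ω, ENNReal.ofReal (|Z i ω| ^ q) ∂μ < ∞) →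
        (∫⁻ ω, ENNReal.ofReal (|∑ i, Z i ω| ^ q) ∂μ) ^ (1 / q)
          ≤ ENNReal.ofReal C *
            (∑ i, ∫⁻ ω, ENNReal.ofReal (|Z i ω| ^ q) ∂μ) ^ (1 / q) := by
  refine ⟨4, by norm_num, fun Ω _ μ _ q hq1 hq2 s Z hZ hindep hmean hmom => ?_⟩
  have hq0 : 0 < q := by linarith
  have hLq (i : Fin s) : MemLp (Z i) (ENNReal.ofReal q) μ :=
    memLp_ofReal_of_lintegral_lt_top (hZ i).aestronglyMeasurable hq0 (hmom i)
  have hSum : MemLp (fun ω => ∑ i, Z i ω) (ENNReal.ofReal q) μ :=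
    memLp_finsetSum _ fun i _ => hLq i
  have hmoment := integral_abs_sum_rpow_le hq1 hq2 hZ hLq hindep hmean Finset.univ
  have hA : 0 ≤ ∫ ω, |∑ i, Z i ω| ^ q ∂μ := integral_nonneg fun ω => by positivity
  have hB (i : Fin s) : 0 ≤ ∫ ω, |Z i ω| ^ q ∂μ := integral_nonneg fun ω => by positivity
  rw [hSum.lintegral_ofReal_abs_rpow hq0.le,
    Finset.sum_congr rfl fun i _ => (hLq i).lintegral_ofReal_abs_rpow hq0.le,
    ← ENNReal.ofReal_sum_of_nonneg fun i _ => hB i,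
    ENNReal.ofReal_rpow_of_nonneg hA (by positivity),
    ENNReal.ofReal_rpow_of_nonneg (Finset.sum_nonneg fun i _ => hB i) (by positivity),
    ← ENNReal.ofReal_mul (by norm_num)]
  exact ENNReal.ofReal_le_ofReal (rpow_one_div_le_four_mul hq1 hq2 hA hmoment)
end

section
/- Let N be a symmetric norm on ℝ^n, let 0 < ε ≤ 1 and let k ≥ 1 be an integer. Assume that (ℝ^k, ℓ_∞) does not embed into (ℝ^n, N) with distortion 1/ε. Then for any nonzero vectors v₁, ..., v_k ∈ ℝ^n with pairwise disjoint supports, one has N(Σ_{i=1}^k v_i) > ε^{-1} · min_i N(v_i). -/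
/-!
Write `S = ∑ vᵢ` and `m = minᵢ N(vᵢ)`. Because the supports are disjoint, `|∑ αᵢ vᵢ|` is
coordinatewise squeezed between `|αⱼ vⱼ|` and `‖α‖_∞ |S|`, and a symmetric norm is monotone in
the absolute values of the coordinates. Hence `α ↦ N(S)⁻¹ ∑ αᵢ vᵢ` embeds `ℓ_∞^k` into `(ℝⁿ, N)`
with distortion `N(S) / m`, so `N(S) ≤ ε⁻¹ m` would contradict the hypothesis.
-/

noncomputable section
open scoped BigOperators

/-- `N` is a norm on `ℝⁿ`. -/
def IsNorm {n : ℕ} (N : (Fin n → ℝ) → ℝ) : Prop :=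
  (∀ v, N v = 0 → v = 0) ∧ (∀ (c : ℝ) (v), N (c • v) = |c| * N v) ∧
  (∀ v w, N (v + w) ≤ N v + N w)

/-- `N` is a symmetric norm on `ℝⁿ`. -/
def IsSymmetricNorm {n : ℕ} (N : (Fin n → ℝ) → ℝ) : Prop :=
  IsNorm N ∧ (∀ (σ : Equiv.Perm (Fin n)) (v : Fin n → ℝ), N (fun i => v (σ i)) = N v) ∧
  (∀ v : Fin n → ℝ, N (fun i => |v i|) = N v)

/-- `(ℝᵏ, NX)` embeds into `(ℝⁿ, NY)` with distortion `D`. -/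
def EmbedsWithDistortion {k n : ℕ} (NX : (Fin k → ℝ) → ℝ) (NY : (Fin n → ℝ) → ℝ)
    (D : ℝ) : Prop :=
  ∃ f : (Fin k → ℝ) →ₗ[ℝ] (Fin n → ℝ), ∀ x, NY (f x) ≤ NX x ∧ NX x ≤ D * NY (f x)

/-- The `ℓ_∞` norm on `ℝᵏ`. -/
def linftyNorm {k : ℕ} (α : Fin k → ℝ) : ℝ := ⨆ i, |α i|

namespace IsNorm

variable {n : ℕ} {N : (Fin n → ℝ) → ℝ}

theorem map_zero (hN : IsNorm N) : N 0 = 0 := by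
  simpa using hN.2.1 0 0

theorem nonneg (hN : IsNorm N) (v : Fin n → ℝ) : 0 ≤ N v := by
  have h := hN.2.2 v ((-1 : ℝ) • v)
  rw [hN.2.1, neg_one_smul, add_neg_cancel, hN.map_zero] at h
  norm_num at h
  linarith

theorem pos (hN : IsNorm N) {v : Fin n → ℝ} (hv : v ≠ 0) : 0 < N v :=
  (hN.nonneg v).lt_of_ne fun h => hv (hN.1 v h.symm)

end IsNorm

namespace IsSymmetricNorm

variable {n : ℕ} {N : (Fin n → ℝ) → ℝ}

theorem norm_update_le (hN : IsSymmetricNorm N) (w : Fin n → ℝ) (j : Fin n) {c : ℝ}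
    (hc : |c| ≤ |w j|) : N (Function.update w j c) ≤ N w := by
  obtain ⟨⟨-, hsmul, htri⟩, -, habs⟩ := hN
  set t := c / w j
  have hct : c = t * w j := by
    rcases eq_or_ne (w j) 0 with h | h
    · rw [h, mul_zero]
      simpa [h] using hc
    · exact (div_mul_cancel₀ c h).symm
  have ht : |t| ≤ 1 := by
    rw [abs_div]; exact div_le_one_of_le₀ hc (abs_nonneg _)
  obtain ⟨ht₁, ht₂⟩ := abs_le.mp ht
  set w' := Function.update w j (-w j)
  have hw' : N w' = N w := by
    rw [← habs w', ← habs w]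
    congr 1; funext i
    rcases eq_or_ne i j with rfl | h <;> simp [w', *]
  have hcomb : Function.update w j c = ((1 + t) / 2) • w + ((1 - t) / 2) • w' := by
    funext i
    rcases eq_or_ne i j with rfl | h
    · simp [w', hct]; ring
    · simp [w', h]; ring
  calc N (Function.update w j c)
      ≤ N (((1 + t) / 2) • w) + N (((1 - t) / 2) • w') := hcomb ▸ htri _ _
    _ = N w := by
      rw [hsmul, hsmul, hw', abs_of_nonneg (by linarith), abs_of_nonneg (by linarith)]
      ring

theorem mono (hN : IsSymmetricNorm N) {u w : Fin n → ℝ} (h : ∀ i, |u i| ≤ |w i|) :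
    N u ≤ N w := by
  classical
  suffices ∀ s : Finset (Fin n), N (s.piecewise u w) ≤ N w by
    simpa using this Finset.univ
  intro s
  induction s using Finset.induction_on with
  | empty => simp
  | insert j s hj ih =>
    rw [Finset.piecewise_insert]
    refine (hN.norm_update_le _ j ?_).trans ih
    rw [Finset.piecewise_eq_of_notMem _ _ _ hj]
    exact h j

end IsSymmetricNorm

section DisjointSupports

variable {ι α : Type*}

theorem abs_sum_apply_of_disjoint [Fintype ι] {v : ι → α → ℝ}
    (hdisj : ∀ i j, i ≠ j → ∀ l, v i l = 0 ∨ v j l = 0) (l : α) :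
    |(∑ i, v i) l| = ∑ i, |v i l| := by
  rw [Finset.sum_apply]
  by_cases hex : ∃ i₀, v i₀ l ≠ 0
  · obtain ⟨i₀, hi₀⟩ := hex
    have hvanish : ∀ i, i ≠ i₀ → v i l = 0 := fun i hi =>
      (hdisj i i₀ hi l).resolve_right hi₀
    rw [Finset.sum_eq_single i₀ (fun i _ hi => hvanish i hi) (by simp),
      Finset.sum_eq_single i₀ (fun i _ hi => by simp [hvanish i hi]) (by simp)]
  · simp only [ne_eq, not_exists, not_not] at hex
    simp [hex]

theorem disjoint_support_smul {v : ι → α → ℝ}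
    (hdisj : ∀ i j, i ≠ j → ∀ l, v i l = 0 ∨ v j l = 0) (c : ι → ℝ) :
    ∀ i j, i ≠ j → ∀ l, (c i • v i) l = 0 ∨ (c j • v j) l = 0 := fun i j hij l => by
  rcases hdisj i j hij l with h | h <;> simp [h]

variable {n : ℕ} {N : (Fin n → ℝ) → ℝ}

theorem IsSymmetricNorm.norm_le_norm_sum_of_disjoint [Fintype ι] (hN : IsSymmetricNorm N)
    {v : ι → Fin n → ℝ} (hdisj : ∀ i j, i ≠ j → ∀ l, v i l = 0 ∨ v j l = 0) (j : ι) :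
    N (v j) ≤ N (∑ i, v i) :=
  hN.mono fun l => by
    rw [abs_sum_apply_of_disjoint hdisj]
    exact Finset.single_le_sum (f := fun i => |v i l|) (fun i _ => abs_nonneg _)
      (Finset.mem_univ j)

theorem IsSymmetricNorm.norm_sum_smul_le_of_disjoint [Fintype ι] (hN : IsSymmetricNorm N)
    {v : ι → Fin n → ℝ} (hdisj : ∀ i j, i ≠ j → ∀ l, v i l = 0 ∨ v j l = 0)
    {c : ι → ℝ} {M : ℝ} (hM : 0 ≤ M) (hc : ∀ i, |c i| ≤ M) :
    N (∑ i, c i • v i) ≤ M * N (∑ i, v i) := by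
  rw [← abs_of_nonneg hM, ← hN.1.2.1]
  refine hN.mono fun l => ?_
  rw [abs_sum_apply_of_disjoint (disjoint_support_smul hdisj c), Pi.smul_apply, smul_eq_mul,
    abs_mul, abs_sum_apply_of_disjoint hdisj, Finset.mul_sum]
  gcongr with i
  rw [Pi.smul_apply, smul_eq_mul, abs_mul]
  exact mul_le_mul_of_nonneg_right ((hc i).trans (le_abs_self M)) (abs_nonneg _)

end DisjointSupports

theorem abs_le_linftyNorm {k : ℕ} (α : Fin k → ℝ) (i : Fin k) : |α i| ≤ linftyNorm α :=
  le_ciSup (f := fun i => |α i|) (Set.finite_range _).bddAbove i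

theorem linftyNorm_nonneg {k : ℕ} (α : Fin k → ℝ) : 0 ≤ linftyNorm α :=
  Real.iSup_nonneg fun _ => abs_nonneg _

theorem EmbedsWithDistortion.mono {k n : ℕ} {NX : (Fin k → ℝ) → ℝ} {NY : (Fin n → ℝ) → ℝ}
    {D D' : ℝ} (h : EmbedsWithDistortion NX NY D) (hD : D ≤ D') (hNY : ∀ y, 0 ≤ NY y) :
    EmbedsWithDistortion NX NY D' := by
  obtain ⟨f, hf⟩ := h
  exact ⟨f, fun x => ⟨(hf x).1, (hf x).2.trans (mul_le_mul_of_nonneg_right hD (hNY _))⟩⟩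

theorem IsSymmetricNorm.embedsWithDistortion_linftyNorm_of_disjoint {n k : ℕ} [NeZero k]
    {N : (Fin n → ℝ) → ℝ} (hN : IsSymmetricNorm N) {v : Fin k → Fin n → ℝ}
    (hdisj : ∀ i j, i ≠ j → ∀ l, v i l = 0 ∨ v j l = 0) {m : ℝ} (hm : 0 < m)
    (hmv : ∀ i, m ≤ N (v i)) :
    EmbedsWithDistortion (linftyNorm (k := k)) N (N (∑ i, v i) / m) := by
  set S := ∑ i, v i
  have hS : 0 < N S := hm.trans_le ((hmv 0).trans (hN.norm_le_norm_sum_of_disjoint hdisj 0))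
  refine ⟨(N S)⁻¹ • Fintype.linearCombination ℝ v, fun α => ?_⟩
  have himage : N (((N S)⁻¹ • Fintype.linearCombination ℝ v) α) =
      (N S)⁻¹ * N (∑ i, α i • v i) := by
    rw [LinearMap.smul_apply, Fintype.linearCombination_apply, hN.1.2.1,
      abs_of_pos (inv_pos.mpr hS)]
  rw [himage]
  constructor
  · calc (N S)⁻¹ * N (∑ i, α i • v i)
        ≤ (N S)⁻¹ * (linftyNorm α * N S) := by
          gcongr
          exact hN.norm_sum_smul_le_of_disjoint hdisj (linftyNorm_nonneg α) (abs_le_linftyNorm α)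
      _ = linftyNorm α := by field_simp
  · have hterm : ∀ i, |α i| * m ≤ N (∑ i, α i • v i) := fun i =>
      calc |α i| * m ≤ |α i| * N (v i) := mul_le_mul_of_nonneg_left (hmv i) (abs_nonneg _)
        _ = N (α i • v i) := (hN.1.2.1 _ _).symm
        _ ≤ N (∑ i, α i • v i) :=
          hN.norm_le_norm_sum_of_disjoint (disjoint_support_smul hdisj α) i
    calc linftyNorm α ≤ N (∑ i, α i • v i) / m :=
          Real.iSup_le (fun i => (le_div_iff₀ hm).mpr (hterm i))
            (div_nonneg (hN.1.nonneg _) hm.le)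
      _ = N S / m * ((N S)⁻¹ * N (∑ i, α i • v i)) := by field_simp

theorem disjoint_support_sum_lower_bound_general {n k : ℕ} (N : (Fin n → ℝ) → ℝ)
    (hN : IsSymmetricNorm N) (ε : ℝ) (hk : 1 ≤ k)
    (hemb : ¬ EmbedsWithDistortion (linftyNorm (k := k)) N (1 / ε))
    (v : Fin k → (Fin n → ℝ)) (hne : ∀ i, v i ≠ 0)
    (hdisj : ∀ i j, i ≠ j → ∀ l, v i l = 0 ∨ v j l = 0) :
    ε⁻¹ * (⨅ i, N (v i)) < N (∑ i, v i) := by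
  by_contra! hsum
  have : NeZero k := ⟨by omega⟩
  obtain ⟨i₀, hi₀⟩ := exists_eq_ciInf_of_finite (f := fun i => N (v i))
  have hm : 0 < ⨅ i, N (v i) := hi₀ ▸ hN.1.pos (hne i₀)
  have hmv : ∀ i, ⨅ i, N (v i) ≤ N (v i) := ciInf_le (Set.finite_range _).bddBelow
  refine hemb ((hN.embedsWithDistortion_linftyNorm_of_disjoint hdisj hm hmv).mono ?_
    hN.1.nonneg)
  rwa [div_le_iff₀ hm, one_div]

/-- If `ℓ_∞^k` does not embed with distortion `1/ε` into a symmetric normed space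
`(ℝⁿ, N)`, then for nonzero vectors `v₁, …, v_k` with pairwise disjoint supports,
`N(∑ vᵢ) > ε⁻¹ · minᵢ N(vᵢ)`. -/
theorem disjoint_support_sum_lower_bound {n k : ℕ} (N : (Fin n → ℝ) → ℝ)
    (hN : IsSymmetricNorm N) (ε : ℝ) (hε0 : 0 < ε) (hε1 : ε ≤ 1) (hk : 1 ≤ k)
    (hemb : ¬ EmbedsWithDistortion (linftyNorm (k := k)) N (1 / ε))
    (v : Fin k → (Fin n → ℝ)) (hne : ∀ i, v i ≠ 0)
    (hdisj : ∀ i j, i ≠ j → ∀ l, v i l = 0 ∨ v j l = 0) :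
    ε⁻¹ * (⨅ i, N (v i)) < N (∑ i, v i) :=
  disjoint_support_sum_lower_bound_general N hN ε hk hemb v hne hdisj
end
end

section
/- Let N be a symmetric norm on ℝ^n, let 0 < ε < 1 and let k ≥ 2 be an integer; set p = log k / log(1/ε) (so that ε^{-p} = k). Assume that (ℝ^k, ℓ_∞) does not embed into (ℝ^n, N) with distortion 1/ε. Let T₁, ..., T_R be pairwise disjoint nonempty subsets of [n], and let v ∈ ℝ^n with N(v) ≤ 1 be such that v is constant on each T_j (v_i = α_j for all i ∈ T_j) and v_i = 0 for i outside ∪_j T_j. Define p_i = 1/(R·|T_j|) for i ∈ T_j and p_i = 0 otherwise. Then for every nonempty S ⊆ ∪_j T_j, (Σ_{i∈S} p_i)^{−1/p} · N(v_S) ≤ (k·R)^{1/p}, where v_S agrees with v on S and is zero elsewhere. -/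
noncomputable section
open scoped BigOperators Classical

namespace SVSB

variable {n : ℕ} {N : (Fin n → ℝ) → ℝ}

lemma N_zero (hN : IsNorm N) : N 0 = 0 := by
  have := hN.2.1 0 0
  simpa using this

lemma N_nonneg (hN : IsNorm N) (u : Fin n → ℝ) : 0 ≤ N u := by
  have h := hN.2.2 u (-u)
  have h2 : N (-u) = N u := by
    have := hN.2.1 (-1) u; simpa using this
  have h0 : N (u + -u) = 0 := by
    rw [add_neg_cancel]; exact N_zero hN
  rw [h0, h2] at h
  linarith

lemma N_abs_congr (hN : IsSymmetricNorm N) {a b : Fin n → ℝ} (h : ∀ i, |a i| = |b i|) :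
    N a = N b := by
  rw [← hN.2.2 a, ← hN.2.2 b]
  congr 1
  funext i; exact h i

lemma N_update_le (hN : IsSymmetricNorm N) (b : Fin n → ℝ) (i : Fin n) (c : ℝ)
    (h : |c| ≤ |b i|) : N (Function.update b i c) ≤ N b := by
  obtain ⟨θ, hθ, hc⟩ : ∃ θ : ℝ, |θ| ≤ 1 ∧ c = θ * b i := by
    by_cases hb : b i = 0
    · refine ⟨0, by norm_num, ?_⟩
      rw [hb] at h
      simp only [abs_zero] at h
      have : c = 0 := abs_nonpos_iff.mp h
      simp [this]
    · refine ⟨c / b i, ?_, (div_mul_cancel₀ c hb).symm⟩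
      rw [abs_div]
      exact div_le_one_of_le₀ h (abs_nonneg _)
  set fl : Fin n → ℝ := fun j => if j = i then -b j else b j with hfl_def
  have hfl : N fl = N b := by
    apply N_abs_congr hN
    intro j
    by_cases hj : j = i <;> simp [hfl_def, hj]
  have key : Function.update b i c = ((1+θ)/2) • b + ((1-θ)/2) • fl := by
    funext j
    by_cases hj : j = i
    · subst hj
      simp only [Function.update_self, Pi.add_apply, Pi.smul_apply, smul_eq_mul,
        hfl_def, if_true, hc]
      ring
    · simp only [Function.update_of_ne hj, Pi.add_apply, Pi.smul_apply, smul_eq_mul,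
        hfl_def, if_neg hj]
      ring
  obtain ⟨hθ1, hθ2⟩ := abs_le.mp hθ
  have h1 : |(1+θ)/2| = (1+θ)/2 := abs_of_nonneg (by linarith)
  have h2 : |(1-θ)/2| = (1-θ)/2 := abs_of_nonneg (by linarith)
  calc N (Function.update b i c) = N (((1+θ)/2) • b + ((1-θ)/2) • fl) := by rw [key]
    _ ≤ N (((1+θ)/2) • b) + N (((1-θ)/2) • fl) := hN.1.2.2 _ _
    _ = ((1+θ)/2) * N b + ((1-θ)/2) * N b := by
        rw [hN.1.2.1, hN.1.2.1, hfl, h1, h2]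
    _ = N b := by ring

lemma N_mono (hN : IsSymmetricNorm N) {a b : Fin n → ℝ} (h : ∀ i, |a i| ≤ |b i|) :
    N a ≤ N b := by
  suffices H : ∀ s : Finset (Fin n), ∀ a b : Fin n → ℝ, (∀ i, |a i| ≤ |b i|) →
      (∀ i, i ∉ s → a i = b i) → N a ≤ N b by
    exact H Finset.univ a b h (fun i hi => absurd (Finset.mem_univ i) hi)
  intro s
  induction s using Finset.induction_on with
  | empty =>
    intro a b _ h2
    exact le_of_eq (congrArg N (funext fun i => h2 i (by simp)))
  | @insert i s hi ih =>
    intro a b h1 h2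
    have hb' : N (Function.update b i (a i)) ≤ N b := N_update_le hN b i (a i) (h1 i)
    refine le_trans (ih a (Function.update b i (a i)) ?_ ?_) hb'
    · intro j
      by_cases hj : j = i
      · subst hj; simp
      · simp only [Function.update_of_ne hj]; exact h1 j
    · intro j hj
      by_cases hji : j = i
      · subst hji; simp
      · rw [Function.update_of_ne hji]
        exact h2 j (by simp [hji, hj])


def vecE {T : Type*} [Fintype T] (e : T ↪ Fin n) (c : T → ℝ) : Fin n → ℝ :=
  fun i => ∑ t : T, if e t = i then c t else 0

variable {T T' : Type*} [Fintype T] [Fintype T']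

lemma vecE_apply (e : T ↪ Fin n) (c : T → ℝ) (t : T) : vecE e c (e t) = c t := by
  rw [vecE, Finset.sum_eq_single_of_mem t (Finset.mem_univ t)]
  · rw [if_pos rfl]
  · intro t' _ ht'
    exact if_neg (fun hh => ht' (e.injective hh))

lemma vecE_apply_notMem (e : T ↪ Fin n) (c : T → ℝ) (i : Fin n) (h : ∀ t, e t ≠ i) :
    vecE e c i = 0 :=
  Finset.sum_eq_zero (fun t _ => if_neg (h t))

lemma vecE_smul (e : T ↪ Fin n) (c : T → ℝ) (r : ℝ) :
    vecE e (fun t => r * c t) = r • vecE e c := by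
  funext i
  simp only [vecE, Pi.smul_apply, smul_eq_mul, Finset.mul_sum]
  exact Finset.sum_congr rfl fun t _ => by split_ifs <;> simp

lemma vecE_reindex (φ : T' ≃ T) (e : T ↪ Fin n) (c : T → ℝ) :
    vecE (φ.toEmbedding.trans e) (fun t' => c (φ t')) = vecE e c := by
  funext i
  exact Fintype.sum_equiv φ _ _ (fun t' => rfl)

lemma N_vecE_congr (hN : IsSymmetricNorm N) (e₁ e₂ : T ↪ Fin n) (c : T → ℝ) :
    N (vecE e₁ c) = N (vecE e₂ c) := by
  set g : {i // i ∈ Set.range e₁} ≃ {i // i ∈ Set.range e₂} :=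
    (Equiv.ofInjective e₁ e₁.injective).symm.trans (Equiv.ofInjective e₂ e₂.injective) with hg
  set σ := g.extendSubtype with hσ
  have key : vecE e₁ c = fun i => vecE e₂ c (σ i) := by
    funext i
    by_cases hi : i ∈ Set.range (⇑e₁)
    · obtain ⟨t, rfl⟩ := hi
      have h1 : σ (e₁ t) = e₂ t := by
        rw [hσ, Equiv.extendSubtype_apply_of_mem g (e₁ t) ⟨t, rfl⟩, hg]
        simp only [Equiv.trans_apply]
        have h2 : (Equiv.ofInjective e₁ e₁.injective).symm ⟨e₁ t, ⟨t, rfl⟩⟩ = t := by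
          apply (Equiv.ofInjective e₁ e₁.injective).injective
          simp
        rw [h2]
        simp [Equiv.ofInjective]
      rw [h1, vecE_apply, vecE_apply]
    · have h3 : ¬ (σ i ∈ Set.range (⇑e₂)) := by
        rw [hσ]; exact Equiv.extendSubtype_not_mem g i hi
      rw [vecE_apply_notMem e₁ c i (fun t ht => hi ⟨t, ht⟩),
        vecE_apply_notMem e₂ c (σ i) (fun t ht => h3 ⟨t, ht⟩)]
  rw [key, hN.2.1 σ (vecE e₂ c)]

lemma N_vecE_sub (hN : IsSymmetricNorm N) (e' : T' ↪ Fin n) (ι : T ↪ T') (c' : T' → ℝ) :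
    N (vecE (ι.trans e') (fun t => c' (ι t))) ≤ N (vecE e' c') := by
  apply N_mono hN
  intro i
  by_cases hi : ∃ t, e' (ι t) = i
  · obtain ⟨t, rfl⟩ := hi
    have h1 : vecE (ι.trans e') (fun t => c' (ι t)) (e' (ι t)) = c' (ι t) := vecE_apply _ _ t
    have h2 : vecE e' c' (e' (ι t)) = c' (ι t) := vecE_apply _ _ (ι t)
    rw [h1, h2]
  · push_neg at hi
    rw [vecE_apply_notMem (ι.trans e') _ i (fun t => hi t)]
    simp [abs_nonneg]


lemma vecE_addc (e : T ↪ Fin n) (c₁ c₂ : T → ℝ) :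
    vecE e (fun t => c₁ t + c₂ t) = vecE e c₁ + vecE e c₂ := by
  funext i
  simp only [vecE, Pi.add_apply, ← Finset.sum_add_distrib]
  exact Finset.sum_congr rfl fun t _ => by split_ifs <;> simp

lemma linfty_le {k : ℕ} [Nonempty (Fin k)] (x : Fin k → ℝ) (l : Fin k) :
    |x l| ≤ linftyNorm x := by
  show |x l| ≤ ⨆ i, |x i|
  exact le_ciSup (Set.Finite.bddAbove (Set.finite_range fun i => |x i|)) l

lemma linfty_nonneg {k : ℕ} [Nonempty (Fin k)] (x : Fin k → ℝ) : 0 ≤ linftyNorm x :=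
  le_trans (abs_nonneg _) (linfty_le x (Classical.arbitrary _))

lemma growth (hN : IsSymmetricNorm N) {k : ℕ} (hk : 2 ≤ k) {D : ℝ} (hD : 0 < D)
    (hemb : ¬ EmbedsWithDistortion (linftyNorm (k := k)) N D)
    (E : Fin k × T ↪ Fin n) (c : T → ℝ) (e : T ↪ Fin n) :
    D * N (vecE e c) ≤ N (vecE E (fun w => c w.2)) := by
  have hk0 : 0 < k := lt_of_lt_of_le two_pos hk
  haveI : Nonempty (Fin k) := ⟨⟨0, hk0⟩⟩
  set B := N (vecE e c) with hB
  set A := N (vecE E (fun w => c w.2)) with hA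
  by_contra hcon
  push_neg at hcon
  -- embeddings of T into the copies
  have ιdef : ∀ l : Fin k, ∃ ι : T ↪ Fin k × T, ∀ t, ι t = (l, t) := by
    intro l
    refine ⟨⟨fun t => (l, t), fun t t' h => ?_⟩, fun t => rfl⟩
    simpa using congrArg Prod.snd h
  have hcopy : ∀ l : Fin k, ∀ d : T → ℝ,
      N (vecE E (fun w => d w.2)) ≥ |1| * 0 → True := fun _ _ _ => trivial
  -- each copy realizes profile c with the same norm
  have key_copy : ∀ (l : Fin k) (d : T → ℝ),
      N (vecE e d) ≤ N (vecE E (fun w => d w.2)) := by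
    intro l d
    obtain ⟨ι, hι⟩ := ιdef l
    have h1 : N (vecE (ι.trans E) (fun t => d ((ι t).2))) ≤ N (vecE E (fun w => d w.2)) :=
      N_vecE_sub hN E ι (fun w => d w.2)
    have h2 : (fun t => d ((ι t).2)) = d := by funext t; rw [hι t]
    rw [h2] at h1
    rw [N_vecE_congr hN e (ι.trans E) d]
    exact h1
  have hB_le_A : B ≤ A := key_copy ⟨0, hk0⟩ c
  have hA_nonneg : 0 ≤ A := N_nonneg hN.1 _
  have hB_pos : 0 < B := by nlinarith
  have hA_pos : 0 < A := lt_of_lt_of_le hB_pos hB_le_A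
  -- build the embedding map
  have Fadd : ∀ x y : Fin k → ℝ, vecE E (fun w => (x + y) w.1 * c w.2)
      = vecE E (fun w => x w.1 * c w.2) + vecE E (fun w => y w.1 * c w.2) := by
    intro x y
    rw [← vecE_addc]
    congr 1
    funext w
    simp [add_mul]
  have Fsmul : ∀ (r : ℝ) (x : Fin k → ℝ), vecE E (fun w => (r • x) w.1 * c w.2)
      = r • vecE E (fun w => x w.1 * c w.2) := by
    intro r x
    rw [← vecE_smul]
    congr 1
    funext w
    simp [mul_assoc]
  let f : (Fin k → ℝ) →ₗ[ℝ] (Fin n → ℝ) :=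
    { toFun := fun x => A⁻¹ • vecE E (fun w => x w.1 * c w.2)
      map_add' := fun x y => by
        show A⁻¹ • vecE E (fun w => (x + y) w.1 * c w.2)
          = A⁻¹ • vecE E (fun w => x w.1 * c w.2) + A⁻¹ • vecE E (fun w => y w.1 * c w.2)
        rw [Fadd, smul_add]
      map_smul' := fun r x => by
        show A⁻¹ • vecE E (fun w => (r • x) w.1 * c w.2)
          = r • (A⁻¹ • vecE E (fun w => x w.1 * c w.2))
        rw [Fsmul]
        exact smul_comm _ _ _ }
  apply hemb
  refine ⟨f, fun x => ⟨?_, ?_⟩⟩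
  · -- upper bound
    have hf : N (f x) = A⁻¹ * N (vecE E (fun w => x w.1 * c w.2)) := by
      have := hN.1.2.1 A⁻¹ (vecE E (fun w => x w.1 * c w.2))
      simpa [f, abs_of_pos (inv_pos.mpr hA_pos)] using this
    have hup : N (vecE E (fun w => x w.1 * c w.2)) ≤ linftyNorm x * A := by
      have hmono : N (vecE E (fun w => x w.1 * c w.2))
          ≤ N (vecE E (fun w => linftyNorm x * (fun w' => c w'.2) w)) := by
        apply N_mono hN
        intro i
        by_cases hi : ∃ w, E w = i
        · obtain ⟨w, rfl⟩ := hi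
          rw [vecE_apply, vecE_apply]
          rw [abs_mul, abs_mul, abs_of_nonneg (linfty_nonneg x)]
          exact mul_le_mul_of_nonneg_right (linfty_le x w.1) (abs_nonneg _)
        · push_neg at hi
          rw [vecE_apply_notMem _ _ _ hi, vecE_apply_notMem _ _ _ hi]
      rw [vecE_smul] at hmono
      calc N (vecE E (fun w => x w.1 * c w.2))
          ≤ N (linftyNorm x • vecE E (fun w => c w.2)) := hmono
        _ = linftyNorm x * A := by
            rw [hN.1.2.1, abs_of_nonneg (linfty_nonneg x)]
    rw [hf]
    calc A⁻¹ * N (vecE E (fun w => x w.1 * c w.2)) ≤ A⁻¹ * (linftyNorm x * A) :=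
          mul_le_mul_of_nonneg_left hup (inv_nonneg.mpr hA_pos.le)
      _ = linftyNorm x := by field_simp
  · -- lower bound
    have hf : N (vecE E (fun w => x w.1 * c w.2)) = A * N (f x) := by
      have := hN.1.2.1 A⁻¹ (vecE E (fun w => x w.1 * c w.2))
      have h2 : N (f x) = A⁻¹ * N (vecE E (fun w => x w.1 * c w.2)) := by
        simpa [f, abs_of_pos (inv_pos.mpr hA_pos)] using this
      rw [h2]
      field_simp
    have hl : ∀ l : Fin k, |x l| ≤ D * N (f x) := by
      intro l
      have h1 : N (vecE e (fun t => x l * c t)) ≤ N (vecE E (fun w => x w.1 * c w.2)) := by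
        obtain ⟨ι, hι⟩ := ιdef l
        have hsub := N_vecE_sub hN E ι (fun w => x w.1 * c w.2)
        have h2 : (fun t => x (ι t).1 * c (ι t).2) = (fun t => x l * c t) := by
          funext t; rw [hι t]
        rw [h2] at hsub
        rw [N_vecE_congr hN e (ι.trans E) (fun t => x l * c t)]
        exact hsub
      rw [vecE_smul] at h1
      have h3 : N (x l • vecE e c) = |x l| * B := hN.1.2.1 _ _
      rw [h3, hf] at h1
      -- |x l| * B ≤ A * N (f x), A ≤ D * B (from hcon : A < D * B)
      have hNf : 0 ≤ N (f x) := N_nonneg hN.1 _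
      have h4 : A * N (f x) ≤ (D * B) * N (f x) :=
        mul_le_mul_of_nonneg_right hcon.le hNf
      have h5 : |x l| * B ≤ (D * N (f x)) * B := by
        calc |x l| * B ≤ (D * B) * N (f x) := le_trans h1 h4
          _ = (D * N (f x)) * B := by ring
      exact le_of_mul_le_mul_right h5 hB_pos
    exact ciSup_le hl


lemma exists_embedding_realizer {R : ℕ} (A : Fin R → Finset (Fin n))
    (hA : ∀ j j', j ≠ j' → Disjoint (A j) (A j')) (α : Fin R → ℝ) (u : Fin n → ℝ)
    (hval : ∀ j, ∀ i ∈ A j, u i = α j) (h0 : ∀ i, (∀ j, i ∉ A j) → u i = 0) :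
    ∃ e : (Σ j : Fin R, Fin ((A j).card)) ↪ Fin n, u = vecE e (fun t => α t.1) := by
  classical
  let g : (Σ j : Fin R, Fin ((A j).card)) → Fin n := fun t => ((A t.1).equivFin.symm t.2 : Fin n)
  have hmem : ∀ t, g t ∈ A t.1 := fun t => ((A t.1).equivFin.symm t.2).2
  have hginj : Function.Injective g := by
    rintro ⟨j, a⟩ ⟨j', a'⟩ h
    have hj : j = j' := by
      by_contra hne
      exact Finset.disjoint_left.mp (hA j j' hne) (hmem ⟨j, a⟩) (h ▸ hmem ⟨j', a'⟩)
    subst hj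
    have ha : a = a' := by
      have h2 : ((A j).equivFin.symm a : Fin n) = ((A j).equivFin.symm a' : Fin n) := h
      have h3 : (A j).equivFin.symm a = (A j).equivFin.symm a' := Subtype.coe_injective h2
      exact (A j).equivFin.symm.injective h3
    rw [ha]
  refine ⟨⟨g, hginj⟩, ?_⟩
  funext i
  by_cases hiA : ∃ j, i ∈ A j
  · obtain ⟨j, hij⟩ := hiA
    have hgt : g ⟨j, (A j).equivFin ⟨i, hij⟩⟩ = i := by
      simp [g]
    have := vecE_apply ⟨g, hginj⟩ (fun t : (Σ j : Fin R, Fin ((A j).card)) => α t.1)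
      ⟨j, (A j).equivFin ⟨i, hij⟩⟩
    simp only [Function.Embedding.coeFn_mk] at this
    rw [hgt] at this
    rw [this]
    exact hval j i hij
  · push_neg at hiA
    rw [vecE_apply_notMem ⟨g, hginj⟩ _ i (fun t h => hiA t.1 (h ▸ hmem t)), h0 i hiA]

end SVSB

/-- For a symmetric norm `N` with `ℓ_∞^k` not embedding with distortion `1/ε`, a vector
`v` with `N v ≤ 1` that is constant on each of the disjoint sets `T₁, …, T_R` and zero
outside, and sampling probabilities `pᵢ = 1/(R·|T_j|)` for `i ∈ T_j`, every nonempty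
`S ⊆ ∪_j T_j` satisfies `(∑_{i∈S} pᵢ)^{-1/p} · N(v_S) ≤ (k·R)^{1/p}`,
where `p = log k / log(1/ε)`. -/
theorem structured_vector_subsampling_bound {n k R : ℕ}
    (N : (Fin n → ℝ) → ℝ) (hN : IsSymmetricNorm N)
    (ε : ℝ) (hε0 : 0 < ε) (hε1 : ε < 1) (hk : 2 ≤ k)
    (p : ℝ) (hp : p = Real.log k / Real.log (1 / ε))
    (hemb : ¬ EmbedsWithDistortion (linftyNorm (k := k)) N (1 / ε))
    (T : Fin R → Finset (Fin n))
    (hTne : ∀ j, (T j).Nonempty)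
    (hTdisj : ∀ j j', j ≠ j' → Disjoint (T j) (T j'))
    (v : Fin n → ℝ) (hv : N v ≤ 1) (α : Fin R → ℝ)
    (hconst : ∀ j, ∀ i ∈ T j, v i = α j)
    (hzero : ∀ i : Fin n, (∀ j, i ∉ T j) → v i = 0)
    (prob : Fin n → ℝ)
    (hprobT : ∀ j, ∀ i ∈ T j, prob i = 1 / ((R : ℝ) * (T j).card))
    (hprob0 : ∀ i : Fin n, (∀ j, i ∉ T j) → prob i = 0)
    (S : Finset (Fin n)) (hS : S.Nonempty) (hSsub : ∀ i ∈ S, ∃ j, i ∈ T j) :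
    (∑ i ∈ S, prob i) ^ (-(1 / p)) * N (fun i => if i ∈ S then v i else 0)
      ≤ ((k : ℝ) * R) ^ (1 / p) := by
  classical
  obtain ⟨i₀, hi₀⟩ := hS
  obtain ⟨j₀, hj₀⟩ := hSsub i₀ hi₀
  have hk0 : 0 < k := lt_of_lt_of_le two_pos hk
  have hR0 : 0 < R := lt_of_le_of_lt (Nat.zero_le _) j₀.isLt
  have hkR : (1:ℝ) < k := by exact_mod_cast lt_of_lt_of_le one_lt_two hk
  have hRpos : (0:ℝ) < R := by exact_mod_cast hR0
  have hD : (0:ℝ) < 1 / ε := by positivity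
  have hD1 : (1:ℝ) < 1 / ε := (one_lt_div hε0).mpr hε1
  have hlogk : 0 < Real.log k := Real.log_pos hkR
  have hloge : 0 < Real.log (1 / ε) := Real.log_pos hD1
  have hp0 : 0 < p := hp ▸ div_pos hlogk hloge
  have hkp : (k:ℝ) ^ (1/p) = 1/ε := by
    rw [Real.rpow_def_of_pos (by positivity : (0:ℝ) < k)]
    have hlogk' : Real.log (k:ℝ) ≠ 0 := ne_of_gt hlogk
    have h1 : Real.log (k:ℝ) * (1/p) = Real.log (1/ε) := by
      rw [hp]
      field_simp
    rw [h1, Real.exp_log hD]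
  -- the subsampled vector
  set vS : Fin n → ℝ := fun i => if i ∈ S then v i else 0 with hvSdef
  -- realizers
  have hvalS : ∀ j, ∀ i ∈ S ∩ T j, vS i = α j := by
    intro j i hi
    rw [Finset.mem_inter] at hi
    rw [hvSdef]
    simp only [if_pos hi.1]
    exact hconst j i hi.2
  have h0S : ∀ i, (∀ j, i ∉ S ∩ T j) → vS i = 0 := by
    intro i hi
    rw [hvSdef]
    simp only
    split_ifs with hiS
    · obtain ⟨j, hj⟩ := hSsub i hiS
      exact absurd (Finset.mem_inter.mpr ⟨hiS, hj⟩) (hi j)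
    · rfl
  obtain ⟨eS, hvS⟩ := SVSB.exists_embedding_realizer (fun j => S ∩ T j)
    (fun j j' hjj => Finset.disjoint_of_subset_left Finset.inter_subset_right
      (Finset.disjoint_of_subset_right Finset.inter_subset_right (hTdisj j j' hjj)))
    α vS hvalS h0S
  obtain ⟨eT, hvT⟩ := SVSB.exists_embedding_realizer T hTdisj α v hconst hzero
  -- iteration lemma
  have iter : ∀ (t : ℕ) (m : Fin R → ℕ) (e : (Σ j : Fin R, Fin (m j)) ↪ Fin n),
      (∀ j, k ^ t * m j ≤ (T j).card) →
      (1/ε) ^ t * N (SVSB.vecE e (fun w => α w.1)) ≤ N v := by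
    intro t
    induction t with
    | zero =>
      intro m e hfit
      simp only [pow_zero, one_mul]
      have hle : ∀ j, m j ≤ (T j).card := fun j => by simpa using hfit j
      have hιinj : Function.Injective
          (fun w : (Σ j : Fin R, Fin (m j)) =>
            (⟨w.1, Fin.castLE (hle w.1) w.2⟩ : Σ j : Fin R, Fin ((T j).card))) := by
        rintro ⟨j, a⟩ ⟨j', a'⟩ h
        simp only [Sigma.mk.inj_iff] at h
        obtain ⟨rfl, h2⟩ := h
        have := Fin.castLE_injective (hle j) (eq_of_heq h2)
        simp [this]
      set ι : (Σ j : Fin R, Fin (m j)) ↪ (Σ j : Fin R, Fin ((T j).card)) :=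
        ⟨_, hιinj⟩ with hι
      have h1 : N (SVSB.vecE (ι.trans eT) (fun w => α ((ι w).1)))
          ≤ N (SVSB.vecE eT (fun w => α w.1)) :=
        SVSB.N_vecE_sub hN eT ι (fun w => α w.1)
      have h2 : (fun w => α ((ι w).1)) = (fun w : (Σ j : Fin R, Fin (m j)) => α w.1) := rfl
      rw [h2] at h1
      rw [hvT]
      calc N (SVSB.vecE e fun w => α w.1)
          = N (SVSB.vecE (ι.trans eT) fun w => α w.1) := SVSB.N_vecE_congr hN _ _ _
        _ ≤ N (SVSB.vecE eT fun w => α w.1) := h1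
    | succ t ih =>
      intro m e hfit
      have hkt1 : ∀ j, k * m j ≤ (T j).card := by
        intro j
        calc k * m j ≤ k ^ (t+1) * m j := by
              apply Nat.mul_le_mul_right
              calc k = k ^ 1 := (pow_one k).symm
                _ ≤ k ^ (t+1) := Nat.pow_le_pow_right hk0 (by omega)
          _ ≤ (T j).card := hfit j
      have hsum : ∑ j, (T j).card ≤ n := by
        calc ∑ j, (T j).card = (Finset.univ.biUnion T).card :=
              (Finset.card_biUnion (fun j _ j' _ h => hTdisj j j' h)).symm
          _ ≤ n := by simpa using Finset.card_le_univ (Finset.univ.biUnion T)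
      have hcard : Fintype.card (Fin k × Σ j : Fin R, Fin (m j)) ≤ Fintype.card (Fin n) := by
        rw [Fintype.card_prod, Fintype.card_sigma, Fintype.card_fin, Fintype.card_fin]
        simp only [Fintype.card_fin]
        calc k * ∑ j, m j = ∑ j, k * m j := Finset.mul_sum _ _ _
          _ ≤ ∑ j, (T j).card := Finset.sum_le_sum (fun j _ => hkt1 j)
          _ ≤ n := hsum
      obtain ⟨E⟩ := Function.Embedding.nonempty_of_card_le hcard
      have step1 : (1/ε) * N (SVSB.vecE e (fun w => α w.1))
          ≤ N (SVSB.vecE E (fun w => α w.2.1)) :=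
        SVSB.growth hN hk hD hemb E (fun w => α w.1) e
      -- reindex
      let φ : (Σ j : Fin R, Fin (k * m j)) ≃ (Fin k × Σ j : Fin R, Fin (m j)) :=
        { toFun := fun w => ((finProdFinEquiv.symm w.2).1, ⟨w.1, (finProdFinEquiv.symm w.2).2⟩)
          invFun := fun z => ⟨z.2.1, finProdFinEquiv (z.1, z.2.2)⟩
          left_inv := by rintro ⟨j, a⟩; simp only [Prod.mk.eta, Equiv.apply_symm_apply]
          right_inv := by rintro ⟨l, j, a⟩; simp only [Equiv.symm_apply_apply] }
      have hre : SVSB.vecE (φ.toEmbedding.trans E) (fun w => α w.1)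
          = SVSB.vecE E (fun w => α w.2.1) := by
        have := SVSB.vecE_reindex φ E (fun w => α w.2.1)
        exact this
      have step2 := ih (fun j => k * m j) (φ.toEmbedding.trans E) (fun j => by
        have h := hfit j
        calc k ^ t * (k * m j) = k ^ (t+1) * m j := by ring
          _ ≤ (T j).card := h)
      rw [hre] at step2
      have hεt : (0:ℝ) ≤ (1/ε) ^ t := by positivity
      calc (1/ε) ^ (t+1) * N (SVSB.vecE e fun w => α w.1)
          = (1/ε) ^ t * ((1/ε) * N (SVSB.vecE e fun w => α w.1)) := by ring
        _ ≤ (1/ε) ^ t * N (SVSB.vecE E fun w => α w.2.1) :=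
            mul_le_mul_of_nonneg_left step1 hεt
        _ ≤ N v := step2
  -- sum of probabilities
  set q : ℝ := ∑ i ∈ S, prob i with hq
  have hprob_nonneg : ∀ i ∈ S, 0 ≤ prob i := by
    intro i hi
    obtain ⟨j, hj⟩ := hSsub i hi
    rw [hprobT j i hj]
    positivity
  have htc_pos : ∀ j : Fin R, (0:ℝ) < (T j).card := by
    intro j; exact_mod_cast (hTne j).card_pos
  have hq_pos : 0 < q := by
    rw [hq]
    apply Finset.sum_pos' hprob_nonneg
    refine ⟨i₀, hi₀, ?_⟩
    rw [hprobT j₀ i₀ hj₀]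
    exact div_pos one_pos (mul_pos hRpos (htc_pos j₀))
  have hterm : ∀ j : Fin R, ((S ∩ T j).card : ℝ) * (1 / ((R:ℝ) * (T j).card)) ≤ q := by
    intro j
    rw [hq]
    calc ((S ∩ T j).card : ℝ) * (1 / ((R:ℝ) * (T j).card))
        = ∑ i ∈ S ∩ T j, prob i := by
          rw [Finset.sum_congr rfl (fun i hi => hprobT j i (Finset.mem_inter.mp hi).2),
            Finset.sum_const, nsmul_eq_mul]
      _ ≤ ∑ i ∈ S, prob i :=
          Finset.sum_le_sum_of_subset_of_nonneg Finset.inter_subset_left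
            (fun i hi _ => hprob_nonneg i hi)
  have hNvs_le : N vS ≤ N v := by
    apply SVSB.N_mono hN
    intro i
    rw [hvSdef]
    by_cases hi : i ∈ S
    · simp [hi]
    · simp [hi, abs_nonneg]
  have hNvs0 : 0 ≤ N vS := SVSB.N_nonneg hN.1 _
  have hkRpos : (0:ℝ) < k := by exact_mod_cast hk0
  -- main bound
  have key : N vS ≤ ((k:ℝ) * R * q) ^ (1/p) := by
    set x : ℝ := (k:ℝ) * R * q with hxdef
    have hx_pos : 0 < x := mul_pos (mul_pos hkRpos hRpos) hq_pos
    rcases le_or_gt 1 x with h1x | h1x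
    · calc N vS ≤ N v := hNvs_le
        _ ≤ 1 := hv
        _ = 1 ^ (1/p) := (Real.one_rpow _).symm
        _ ≤ x ^ (1/p) := Real.rpow_le_rpow zero_le_one h1x (by positivity)
    · set Rq : ℝ := (R:ℝ) * q with hRqdef
      have hRq_pos : 0 < Rq := mul_pos hRpos hq_pos
      have hyk : (k:ℝ) ≤ 1 / Rq := by
        rw [le_div_iff₀ hRq_pos]
        calc (k:ℝ) * Rq = x := by rw [hxdef, hRqdef]; ring
          _ ≤ 1 := h1x.le
      have h1y : 1 ≤ 1 / Rq := hkR.le.trans hyk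
      obtain ⟨t, ht1, ht2⟩ := exists_nat_pow_near h1y hkR
      have hfit : ∀ j, k ^ t * (S ∩ T j).card ≤ (T j).card := by
        intro j
        have h1 : ((S ∩ T j).card : ℝ) ≤ q * ((R:ℝ) * (T j).card) := by
          have h := hterm j
          rw [mul_one_div] at h
          exact (div_le_iff₀ (mul_pos hRpos (htc_pos j))).mp h
        have h2 : ((k:ℝ)) ^ t * ((S ∩ T j).card : ℝ) ≤ ((T j).card : ℝ) := by
          calc (k:ℝ) ^ t * ((S ∩ T j).card : ℝ)
              ≤ (1 / Rq) * (q * ((R:ℝ) * (T j).card)) := by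
                apply mul_le_mul ht1 h1 (by positivity) (by positivity)
            _ = (T j).card := by
                rw [hRqdef]
                field_simp
        exact_mod_cast h2
      have hiter := iter t (fun j => (S ∩ T j).card) eS hfit
      rw [← hvS] at hiter
      have hNvs_eps : N vS ≤ ε ^ t := by
        have h3 : (1/ε) ^ t * N vS ≤ 1 := le_trans hiter hv
        have h4 : (0:ℝ) < ε ^ t := pow_pos hε0 t
        have h5 : (1/ε) ^ t = (ε ^ t)⁻¹ := by rw [one_div, inv_pow]
        rw [h5] at h3
        calc N vS = ε ^ t * ((ε ^ t)⁻¹ * N vS) := (mul_inv_cancel_left₀ h4.ne' (N vS)).symm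
          _ ≤ ε ^ t * 1 := mul_le_mul_of_nonneg_left h3 h4.le
          _ = ε ^ t := mul_one _
      have hpow : ((k:ℝ) ^ (1/p)) ^ t = ((k:ℝ) ^ t) ^ (1/p) := by
        rw [← Real.rpow_natCast ((k:ℝ) ^ (1/p)) t, ← Real.rpow_natCast (k:ℝ) t,
          ← Real.rpow_mul (by positivity), ← Real.rpow_mul (by positivity), mul_comm]
      have hε_eq : ε = ((k:ℝ) ^ (1/p))⁻¹ := by rw [hkp, one_div, inv_inv]
      have hεt_eq : ε ^ t = (((k:ℝ) ^ t) ^ (1/p))⁻¹ := by rw [hε_eq, inv_pow, hpow]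
      have hgx : 1 ≤ (k:ℝ) ^ t * x := by
        calc (1:ℝ) ≤ (k:ℝ) ^ (t+1) * Rq := ((div_lt_iff₀ hRq_pos).mp ht2).le
          _ = (k:ℝ) ^ t * x := by rw [hxdef, hRqdef, pow_succ]; ring
      have h7 : 1 ≤ ((k:ℝ) ^ t) ^ (1/p) * x ^ (1/p) := by
        rw [← Real.mul_rpow (by positivity) hx_pos.le]
        calc (1:ℝ) = 1 ^ (1/p) := (Real.one_rpow _).symm
          _ ≤ ((k:ℝ) ^ t * x) ^ (1/p) := Real.rpow_le_rpow zero_le_one hgx (by positivity)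
      have hkt_pos : (0:ℝ) < ((k:ℝ) ^ t) ^ (1/p) := by positivity
      calc N vS ≤ ε ^ t := hNvs_eps
        _ = (((k:ℝ) ^ t) ^ (1/p))⁻¹ := hεt_eq
        _ ≤ x ^ (1/p) := by
            have h8 := mul_le_mul_of_nonneg_left h7 (inv_nonneg.mpr hkt_pos.le)
            rw [mul_one, ← mul_assoc, inv_mul_cancel₀ hkt_pos.ne', one_mul] at h8
            exact h8
  -- conclude
  have hqp : (0:ℝ) < q ^ (1/p) := Real.rpow_pos_of_pos hq_pos _
  have hq1 : q ^ (-(1/p)) * (((k:ℝ) * R * q) ^ (1/p)) = ((k:ℝ) * R) ^ (1/p) := by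
    rw [Real.rpow_neg hq_pos.le, Real.mul_rpow (by positivity) hq_pos.le,
      mul_comm (q ^ (1/p))⁻¹, mul_assoc, mul_inv_cancel₀ hqp.ne', mul_one]
  calc q ^ (-(1/p)) * N vS ≤ q ^ (-(1/p)) * (((k:ℝ) * R * q) ^ (1/p)) := by
        apply mul_le_mul_of_nonneg_left key
        rw [Real.rpow_neg hq_pos.le]
        exact inv_nonneg.mpr (Real.rpow_nonneg hq_pos.le _)
    _ = ((k:ℝ) * R) ^ (1/p) := hq1
end
end

section
/- For every integer 1 ≤ k ≤ n, the dual norm of the top-k norm T^(k) on ℝ^n is given by (T^(k))*(w) = max(‖w‖_∞, ‖w‖_1 / k) for all w ∈ ℝ^n. -/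
noncomputable section
open scoped BigOperators

/-- The dual norm `N*(w) = sup {⟨v,w⟩ : N(v) ≤ 1}`. -/
def dualNorm {n : ℕ} (N : (Fin n → ℝ) → ℝ) (w : Fin n → ℝ) : ℝ :=
  sSup {t | ∃ v, N v ≤ 1 ∧ t = ∑ i, v i * w i}

/-- The top-`k` norm: the sum of the `k` largest among `|v₁|, …, |vₙ|`, i.e. the largest
value of `∑_{i ∈ S} |v i|` over subsets `S` of size `k`. -/
def topkNorm (n k : ℕ) (v : Fin n → ℝ) : ℝ :=
  sSup {t | ∃ S : Finset (Fin n), S.card = k ∧ t = ∑ i ∈ S, |v i|}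

/-!
Write `M = max(‖w‖_∞, ‖w‖₁ / k)`. For the upper bound, let `S` be a set of `k` largest entries
of `|v|` and `θ` the smallest of them, so that `|v i| ≥ θ` on `S` and `|v i| ≤ θ` off `S`. Then
`∑ |v i| |w i| = ∑_S (|v i| - θ) |w i| + ∑_{Sᶜ} (|v i| - θ) |w i| + θ ‖w‖₁`, where the first sum
is at most `M ∑_S (|v i| - θ)`, the second is nonpositive and the last term is at most `θ k M`;
altogether `⟨v, w⟩ ≤ M ∑_S |v i| = M ‖v‖_{T^(k)}`. The bound is attained by `sign(w i₀) eᵢ₀` at a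
largest entry `i₀` when `M = ‖w‖_∞`, and by `sign(w) / k` when `M = ‖w‖₁ / k`.
-/

open Finset

theorem abs_sign_le_one (x : ℝ) : |(SignType.sign x : ℝ)| ≤ 1 := by
  rcases lt_trichotomy x 0 with h | h | h <;> simp [h]

section Threshold

variable {ι : Type*} [Fintype ι] [DecidableEq ι]

theorem exists_card_eq_threshold (a : ι → ℝ) {k : ℕ} (hk : 1 ≤ k) (hkι : k ≤ Fintype.card ι) :
    ∃ S : Finset ι, #S = k ∧ ∃ i₀ ∈ S, (∀ i ∈ S, a i₀ ≤ a i) ∧ ∀ i ∉ S, a i ≤ a i₀ := by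
  obtain ⟨S, hS, hmax⟩ := exists_max_image (powersetCard k univ) (fun S => ∑ i ∈ S, a i)
    (powersetCard_nonempty.mpr (by simpa using hkι))
  have hcard : #S = k := (mem_powersetCard.mp hS).2
  obtain ⟨i₀, hi₀, hmin⟩ := exists_min_image S a (card_pos.mp (by omega))
  refine ⟨S, hcard, i₀, hi₀, hmin, fun j hj => ?_⟩
  by_contra! hlt
  -- exchanging `i₀` for `j` would give a `k`-subset with a larger sum
  have hj' : j ∉ S.erase i₀ := fun h => hj (mem_of_mem_erase h)
  have hswap := hmax (insert j (S.erase i₀)) <| mem_powersetCard.mpr ⟨subset_univ _, by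
    rw [card_insert_of_notMem hj', card_erase_of_mem hi₀, hcard]; omega⟩
  rw [sum_insert hj'] at hswap
  linarith [sum_erase_add S a hi₀]

theorem sum_mul_le_of_threshold {a u : ι → ℝ} {S : Finset ι} {θ M : ℝ} (hθ : 0 ≤ θ)
    (hS : ∀ i ∈ S, θ ≤ a i) (hSc : ∀ i ∉ S, a i ≤ θ) (hu : ∀ i, 0 ≤ u i) (huM : ∀ i, u i ≤ M)
    (hsum : ∑ i, u i ≤ #S * M) :
    ∑ i, a i * u i ≤ M * ∑ i ∈ S, a i := by
  have hin : ∑ i ∈ S, (a i - θ) * u i ≤ ∑ i ∈ S, (a i - θ) * M :=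
    sum_le_sum fun i hi => mul_le_mul_of_nonneg_left (huM i) (sub_nonneg.mpr (hS i hi))
  have hout : ∑ i ∈ Sᶜ, (a i - θ) * u i ≤ 0 :=
    sum_nonpos fun i hi => mul_nonpos_of_nonpos_of_nonneg
      (sub_nonpos.mpr (hSc i (mem_compl.mp hi))) (hu i)
  calc ∑ i, a i * u i = ∑ i ∈ S, (a i - θ) * u i + ∑ i ∈ Sᶜ, (a i - θ) * u i + θ * ∑ i, u i := by
        rw [sum_add_sum_compl, mul_sum, ← sum_add_distrib]
        exact sum_congr rfl fun i _ => by ring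
    _ ≤ ∑ i ∈ S, (a i - θ) * M + 0 + θ * (#S * M) := by gcongr
    _ = M * ∑ i ∈ S, a i := by
        rw [← sum_mul, sum_sub_distrib, sum_const, nsmul_eq_mul]
        ring

end Threshold

section TopK

variable {n k : ℕ}

theorem bddAbove_topkNorm_set (v : Fin n → ℝ) :
    BddAbove {t | ∃ S : Finset (Fin n), #S = k ∧ t = ∑ i ∈ S, |v i|} :=
  ((Set.finite_range fun S : Finset (Fin n) => ∑ i ∈ S, |v i|).subset
    (by rintro t ⟨S, -, rfl⟩; exact ⟨S, rfl⟩)).bddAbove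

theorem sum_abs_le_topkNorm (v : Fin n → ℝ) {S : Finset (Fin n)} (hS : #S = k) :
    ∑ i ∈ S, |v i| ≤ topkNorm n k v :=
  le_csSup (bddAbove_topkNorm_set v) ⟨S, hS, rfl⟩

theorem topkNorm_le_of_forall_sum_le (hkn : k ≤ n) {v : Fin n → ℝ} {c : ℝ}
    (h : ∀ S : Finset (Fin n), #S = k → ∑ i ∈ S, |v i| ≤ c) : topkNorm n k v ≤ c := by
  obtain ⟨S, -, hS⟩ := exists_subset_card_eq (s := (univ : Finset (Fin n))) (by simpa using hkn)
  exact csSup_le ⟨_, S, hS, rfl⟩ (by rintro t ⟨T, hT, rfl⟩; exact h T hT)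

theorem topkNorm_le_sum_abs (hkn : k ≤ n) (v : Fin n → ℝ) : topkNorm n k v ≤ ∑ i, |v i| :=
  topkNorm_le_of_forall_sum_le hkn fun S _ =>
    sum_le_sum_of_subset_of_nonneg (subset_univ S) fun i _ _ => abs_nonneg (v i)

theorem topkNorm_le_of_abs_le (hkn : k ≤ n) {v : Fin n → ℝ} {c : ℝ} (h : ∀ i, |v i| ≤ c) :
    topkNorm n k v ≤ k * c :=
  topkNorm_le_of_forall_sum_le hkn fun S hS => by
    simpa [hS] using sum_le_sum fun i (_ : i ∈ S) => h i

theorem sum_mul_le_topkNorm_mul (hk : 1 ≤ k) (hkn : k ≤ n) (v w : Fin n → ℝ) :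
    ∑ i, v i * w i ≤ topkNorm n k v * max (⨆ i, |w i|) ((∑ i, |w i|) / k) := by
  set M := max (⨆ i, |w i|) ((∑ i, |w i|) / k)
  obtain ⟨S, hS, i₀, -, hmin, hout⟩ :=
    exists_card_eq_threshold (fun i => |v i|) hk (by simpa using hkn)
  have hwM : ∀ i, |w i| ≤ M := fun i =>
    (le_ciSup (Set.finite_range fun j => |w j|).bddAbove i).trans (le_max_left _ _)
  have hsum : ∑ i, |w i| ≤ #S * M := by
    rw [hS, ← div_le_iff₀' (by exact_mod_cast hk)]
    exact le_max_right _ _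
  calc ∑ i, v i * w i ≤ ∑ i, |v i| * |w i| :=
        sum_le_sum fun i _ => abs_mul (v i) (w i) ▸ le_abs_self _
    _ ≤ M * ∑ i ∈ S, |v i| :=
        sum_mul_le_of_threshold (abs_nonneg _) hmin hout (fun i => abs_nonneg _) hwM hsum
    _ ≤ M * topkNorm n k v := by
        gcongr
        exact sum_abs_le_topkNorm v hS
    _ = topkNorm n k v * M := mul_comm _ _

theorem exists_topkNorm_le_one_sum_mul_eq (hk : 1 ≤ k) (hkn : k ≤ n) (w : Fin n → ℝ) :
    ∃ v, topkNorm n k v ≤ 1 ∧ ∑ i, v i * w i = max (⨆ i, |w i|) ((∑ i, |w i|) / k) := by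
  rcases le_total ((∑ i, |w i|) / k) (⨆ i, |w i|) with h | h
  · have : Nonempty (Fin n) := ⟨⟨0, by omega⟩⟩
    obtain ⟨i₀, hi₀⟩ := exists_eq_ciSup_of_finite (f := fun i => |w i|)
    refine ⟨Pi.single i₀ (SignType.sign (w i₀) : ℝ), ?_, ?_⟩
    · calc topkNorm n k _ ≤ ∑ i, |Pi.single i₀ (SignType.sign (w i₀) : ℝ) i| :=
            topkNorm_le_sum_abs hkn _
        _ = |(SignType.sign (w i₀) : ℝ)| := by
            simp [Pi.single_apply, apply_ite]
        _ ≤ 1 := abs_sign_le_one _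
    · rw [max_eq_left h, ← hi₀]
      simp [Pi.single_apply, sign_mul_self]
  · refine ⟨fun i => SignType.sign (w i) / k, ?_, ?_⟩
    · calc topkNorm n k _ ≤ k * (1 / k) := topkNorm_le_of_abs_le hkn fun i => by
            rw [abs_div, Nat.abs_cast]
            gcongr
            exact abs_sign_le_one _
        _ = 1 := by field_simp
    · rw [max_eq_right h, sum_div]
      exact sum_congr rfl fun i _ => by rw [div_mul_eq_mul_div, sign_mul_self]

end TopK

/-- The dual of the top-`k` norm is `w ↦ max(‖w‖_∞, ‖w‖₁ / k)`. -/
theorem topk_dual_norm {n k : ℕ} (hk : 1 ≤ k) (hkn : k ≤ n) (w : Fin n → ℝ) :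
    dualNorm (topkNorm n k) w = max (⨆ i, |w i|) ((∑ i, |w i|) / k) := by
  have hM : 0 ≤ max (⨆ i, |w i|) ((∑ i, |w i|) / k) := le_max_of_le_right (by positivity)
  obtain ⟨v₀, hv₀, hsum₀⟩ := exists_topkNorm_le_one_sum_mul_eq hk hkn w
  refine IsGreatest.csSup_eq ⟨⟨v₀, hv₀, hsum₀.symm⟩, ?_⟩
  rintro t ⟨v, hv, rfl⟩
  exact (sum_mul_le_topkNorm_mul hk hkn v w).trans (mul_le_of_le_one_left hM hv)
end
end
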